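/- arXiv:1706.00313 — 3 statements merged into one kernel-verified Lean document; each statement's English description precedes it below -/
import Mathlib

section
/- If t ≥ 2g − 1, then the set Ψ(t) is finite and has cardinality #Ψ(t) = 1 − g + t. -/
/-!
With `D = m(q+1) = qⁿ + 1` and `v(a,b) = q³a + mqb`, the points of `Ψ(t)` above `(a,b)` are the
`c` with `0 ≤ c ≤ ⌊(t - v(a,b))/D⌋`. On the box `[0,m) × [0,q]`, which has `D` points, `v` never
exceeds its corner value `v(m-1,q) = 2g - 1 + D`, so `t ≥ 2g - 1` gives `⌊(t - v)/D⌋ ≥ -1`: no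
column count `⌊(t - v)/D⌋ + 1` is negative. As `q` is prime to `m` and to `q + 1`, `v` hits every
residue mod `D` exactly once on the box, so the remainders of `t - v` sum to `D(D-1)/2`; pairing
`p` with `(m-1,q) - p` shows that the values of `v` sum to `D · v(m-1,q)/2`. Summing the columns
leaves `t - g + 1`.
-/

/-- The lattice point set `Ψ(t) = {(a,b,c) ∈ ℤ³ : 0 ≤ a < m, 0 ≤ b ≤ q, c ≥ 0,
q³ a + m q b + m(q+1) c ≤ t}`. -/
def PsiSet (q : ℕ) (m t : ℤ) : Set (ℤ × ℤ × ℤ) :=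
  {p | 0 ≤ p.1 ∧ p.1 < m ∧ 0 ≤ p.2.1 ∧ p.2.1 ≤ (q : ℤ) ∧ 0 ≤ p.2.2 ∧
    (q : ℤ) ^ 3 * p.1 + m * (q : ℤ) * p.2.1 + m * ((q : ℤ) + 1) * p.2.2 ≤ t}

open Finset

theorem Finset.sum_mul_two_of_reflect {α R : Type*} [AddCommGroup α] [Semiring R] {s : Finset α}
    {c : α} {f : α → R} {K : R} (hs : ∀ x ∈ s, c - x ∈ s) (hf : ∀ x ∈ s, f x + f (c - x) = K) :
    (∑ x ∈ s, f x) * 2 = #s * K := by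
  have hreflect : ∑ x ∈ s, f (c - x) = ∑ x ∈ s, f x :=
    sum_nbij' (c - ·) (c - ·) hs hs (fun x _ => sub_sub_cancel c x) (fun x _ => sub_sub_cancel c x)
      fun _ _ => rfl
  rw [mul_two]
  nth_rw 2 [← hreflect]
  rw [← sum_add_distrib, sum_congr rfl hf, sum_const, nsmul_eq_mul]

theorem Int.sum_Ico_zero_id_mul_two {N : ℤ} (hN : 0 ≤ N) :
    (∑ r ∈ Ico 0 N, r) * 2 = N * (N - 1) := by
  rw [sum_mul_two_of_reflect (c := N - 1) (K := N - 1), Int.card_Ico_of_le _ _ hN, sub_zero]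
  · intro x hx
    rw [mem_Ico] at hx ⊢
    omega
  · intro x _
    ring

theorem Int.ModEq.cancel_left_of_isCoprime {m a b c : ℤ} (hc : IsCoprime c m)
    (h : c * a ≡ c * b [ZMOD m]) : a ≡ b [ZMOD m] :=
  Int.modEq_iff_dvd.2 <| hc.symm.dvd_of_dvd_mul_left <| by rw [mul_sub]; exact h.dvd

theorem Int.ModEq.eq_of_mem_Ico {m a b : ℤ} (h : a ≡ b [ZMOD m]) (ha : a ∈ Ico 0 m)
    (hb : b ∈ Ico 0 m) : a = b := by
  rw [mem_Ico] at ha hb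
  rwa [Int.ModEq, Int.emod_eq_of_lt ha.1 ha.2, Int.emod_eq_of_lt hb.1 hb.2] at h

theorem Int.sum_emod_mul_two_of_injOn {ι : Type*} {s : Finset ι} {f : ι → ℤ} {D : ℤ}
    (hD : 0 < D) (hcard : (#s : ℤ) = D) (hf : ∀ i ∈ s, ∀ j ∈ s, f i ≡ f j [ZMOD D] → i = j) :
    (∑ i ∈ s, f i % D) * 2 = D * (D - 1) := by
  have hinj : Set.InjOn (fun i => f i % D) s := hf
  have himage : s.image (fun i => f i % D) = Ico 0 D := by
    refine eq_of_subset_of_card_le (fun r hr => ?_) ?_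
    · obtain ⟨i, -, rfl⟩ := mem_image.1 hr
      exact mem_Ico.2 ⟨Int.emod_nonneg _ hD.ne', Int.emod_lt_of_pos _ hD⟩
    · rw [card_image_of_injOn hinj, Int.card_Ico, sub_zero]
      omega
  rw [← Int.sum_Ico_zero_id_mul_two hD.le, ← himage, sum_image hinj]

theorem Int.sum_ediv_mul_two_of_injOn {ι : Type*} {s : Finset ι} {f : ι → ℤ} {D : ℤ}
    (hD : 0 < D) (hcard : (#s : ℤ) = D) (hf : ∀ i ∈ s, ∀ j ∈ s, f i ≡ f j [ZMOD D] → i = j) :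
    D * (∑ i ∈ s, f i / D) * 2 = 2 * ∑ i ∈ s, f i - D * (D - 1) := by
  have hsplit : ∑ i ∈ s, f i = D * ∑ i ∈ s, f i / D + ∑ i ∈ s, f i % D := by
    rw [mul_sum, ← sum_add_distrib]
    exact sum_congr rfl fun i _ => (Int.mul_ediv_add_emod _ _).symm
  linear_combination -2 * hsplit - Int.sum_emod_mul_two_of_injOn hD hcard hf

theorem eq_of_add_mul_modEq {m N α β a a' b b' : ℤ} (hα : IsCoprime α m) (hβ : IsCoprime β N)
    (ha : a ∈ Ico 0 m) (ha' : a' ∈ Ico 0 m) (hb : b ∈ Ico 0 N) (hb' : b' ∈ Ico 0 N)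
    (h : α * a + m * β * b ≡ α * a' + m * β * b' [ZMOD m * N]) : a = a' ∧ b = b' := by
  have hm : m ≠ 0 := by rw [mem_Ico] at ha; omega
  have hαa : α * a ≡ α * a' [ZMOD m] := by
    simpa only [mul_assoc, Int.add_modulus_mul_modEq_iff, Int.modEq_add_modulus_mul_iff]
      using h.of_mul_right N
  obtain rfl : a = a' := (hαa.cancel_left_of_isCoprime hα).eq_of_mem_Ico ha ha'
  have hβb : β * b ≡ β * b' [ZMOD N] :=
    Int.ModEq.mul_left_cancel' hm <| by simpa only [mul_assoc] using h.add_left_cancel' (α * a)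
  exact ⟨rfl, (hβb.cancel_left_of_isCoprime hβ).eq_of_mem_Ico hb hb'⟩

def columnSet {α β : Type*} (B : Finset (α × β)) (h : α × β → ℤ) : Set (α × β × ℤ) :=
  {x | (x.1, x.2.1) ∈ B ∧ 0 ≤ x.2.2 ∧ x.2.2 ≤ h (x.1, x.2.1)}

section
variable {α β : Type*} [DecidableEq α] [DecidableEq β] (B : Finset (α × β)) (h : α × β → ℤ)

theorem columnSet_eq_image_sigma :
    columnSet B h = (B.sigma fun p => Icc 0 (h p)).image fun x => (x.1.1, x.1.2, x.2) := by
  ext ⟨a, b, c⟩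
  simp [columnSet]

theorem columnSet_finite : (columnSet B h).Finite := by
  rw [columnSet_eq_image_sigma]
  exact finite_toSet _

theorem ncard_columnSet (hh : ∀ p ∈ B, -1 ≤ h p) :
    ((columnSet B h).ncard : ℤ) = ∑ p ∈ B, (h p + 1) := by
  rw [columnSet_eq_image_sigma, Set.ncard_coe_finset, card_image_of_injective, card_sigma]
  · push_cast
    refine sum_congr rfl fun p hp => ?_
    rw [Int.card_Icc_of_le 0 (h p) (by linarith [hh p hp]), sub_zero]
  · rintro ⟨⟨a, b⟩, c⟩ ⟨⟨a', b'⟩, c'⟩ hxy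
    simp_all
end

def psiWeight (q : ℕ) (m : ℤ) (p : ℤ × ℤ) : ℤ := (q : ℤ) ^ 3 * p.1 + m * q * p.2

noncomputable def psiBox (q : ℕ) (m : ℤ) : Finset (ℤ × ℤ) := Ico 0 m ×ˢ Ico 0 ((q : ℤ) + 1)

theorem PsiSet_eq_columnSet (q : ℕ) (m t : ℤ) (hD : 0 < m * (q + 1)) :
    PsiSet q m t = columnSet (psiBox q m) fun p => (t - psiWeight q m p) / (m * (q + 1)) := by
  ext ⟨a, b, c⟩
  simp only [PsiSet, columnSet, psiBox, psiWeight, mem_product, mem_Ico,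
    Int.le_ediv_iff_mul_le hD, Int.lt_add_one_iff]
  constructor
  · rintro ⟨ha0, ham, hb0, hbq, hc0, hle⟩
    exact ⟨⟨⟨ha0, ham⟩, hb0, hbq⟩, hc0, by linarith⟩
  · rintro ⟨⟨⟨ha0, ham⟩, hb0, hbq⟩, hc0, hle⟩
    exact ⟨ha0, ham, hb0, hbq, hc0, by linarith⟩

theorem isCoprime_of_mul_add_one_eq_pow_add_one {R : Type*} [CommRing R] {q m : R} {n : ℕ}
    (hn : 0 < n) (h : m * (q + 1) = q ^ n + 1) : IsCoprime q m := by
  obtain ⟨k, rfl⟩ := Nat.exists_eq_add_of_lt hn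
  exact ⟨m - q ^ k, 1, by linear_combination h⟩

theorem eq_of_psiWeight_modEq {q n : ℕ} {m : ℤ} (hn : 0 < n)
    (hm : m * ((q : ℤ) + 1) = (q : ℤ) ^ n + 1) {p p' : ℤ × ℤ} (hp : p ∈ psiBox q m)
    (hp' : p' ∈ psiBox q m) (h : psiWeight q m p ≡ psiWeight q m p' [ZMOD m * (q + 1)]) :
    p = p' := by
  rw [psiBox, mem_product] at hp hp'
  have hqm : IsCoprime (q : ℤ) m := isCoprime_of_mul_add_one_eq_pow_add_one hn hm
  have hqq : IsCoprime (q : ℤ) (q + 1) := ⟨-1, 1, by ring⟩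
  obtain ⟨h1, h2⟩ := eq_of_add_mul_modEq hqm.pow_left hqq hp.1 hp'.1 hp.2 hp'.2 h
  exact Prod.ext h1 h2

section
variable {q : ℕ} {m : ℤ}

theorem card_psiBox (hm0 : 0 ≤ m) : (#(psiBox q m) : ℤ) = m * (q + 1) := by
  rw [psiBox, card_product, Nat.cast_mul, Int.card_Ico_of_le _ _ hm0,
    Int.card_Ico_of_le _ _ (by positivity), sub_zero, sub_zero]

theorem sum_psiWeight_mul_two (hm0 : 0 ≤ m) :
    (∑ p ∈ psiBox q m, psiWeight q m p) * 2 = m * (q + 1) * psiWeight q m (m - 1, q) := by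
  rw [sum_mul_two_of_reflect (c := (m - 1, (q : ℤ))) (K := psiWeight q m (m - 1, q)),
    card_psiBox hm0]
  · rintro ⟨a, b⟩ hp
    simp only [psiBox, mem_product, mem_Ico, Prod.mk_sub_mk] at hp ⊢
    omega
  · intro p _
    simp only [psiWeight, Prod.fst_sub, Prod.snd_sub]
    ring

theorem psiWeight_le_corner {p : ℤ × ℤ} (hp : p ∈ psiBox q m) :
    psiWeight q m p ≤ psiWeight q m (m - 1, q) := by
  rw [psiBox, mem_product, mem_Ico, mem_Ico] at hp
  have hm0 : 0 ≤ m := by omega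
  unfold psiWeight
  gcongr <;> omega

theorem psiWeight_corner {n : ℕ} {g : ℤ} (hm : m * ((q : ℤ) + 1) = (q : ℤ) ^ n + 1)
    (hg : 2 * g = ((q : ℤ) - 1) * ((q : ℤ) ^ (n + 1) + (q : ℤ) ^ n - (q : ℤ) ^ 2)) :
    psiWeight q m (m - 1, q) = 2 * g - 1 + m * (q + 1) := by
  unfold psiWeight
  linear_combination ((q : ℤ) ^ 2 - 1) * hm - hg

end

theorem card_PsiSet_general (q n : ℕ) (hn1 : 1 < n)
    (m g : ℤ) (hm : m * ((q : ℤ) + 1) = (q : ℤ) ^ n + 1)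
    (hg : 2 * g = ((q : ℤ) - 1) * ((q : ℤ) ^ (n + 1) + (q : ℤ) ^ n - (q : ℤ) ^ 2))
    (t : ℤ) (ht : 2 * g - 1 ≤ t) :
    (PsiSet q m t).Finite ∧ ((PsiSet q m t).ncard : ℤ) = 1 - g + t := by
  have hD : 0 < m * (q + 1) := by rw [hm]; positivity
  have hm0 : 0 ≤ m := (pos_of_mul_pos_left hD (by positivity)).le
  have hcorner := psiWeight_corner hm hg
  rw [PsiSet_eq_columnSet q m t hD]
  refine ⟨columnSet_finite _ _, ?_⟩
  have hcolumn : ∀ p ∈ psiBox q m, -1 ≤ (t - psiWeight q m p) / (m * (q + 1)) := fun p hp =>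
    (Int.le_ediv_iff_mul_le hD).2 (by linarith [psiWeight_le_corner hp])
  have hfloor := Int.sum_ediv_mul_two_of_injOn (f := fun p => t - psiWeight q m p) hD
    (card_psiBox hm0) fun p hp p' hp' h => eq_of_psiWeight_modEq (by omega) hm hp hp'
      (by simpa only [sub_sub_cancel] using h.sub_left t)
  rw [ncard_columnSet _ _ hcolumn, sum_add_distrib, sum_const, nsmul_eq_mul, card_psiBox hm0]
  rw [sum_sub_distrib, sum_const, nsmul_eq_mul, card_psiBox hm0] at hfloor
  apply mul_left_cancel₀ (mul_ne_zero hD.ne' two_ne_zero)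
  linear_combination hfloor - sum_psiWeight_mul_two hm0 - m * (q + 1) * hcorner

/-- If `t ≥ 2g - 1`, then `Ψ(t)` is finite and `#Ψ(t) = 1 - g + t`. -/
theorem card_PsiSet (q n : ℕ) (hq : IsPrimePow q) (hn : Odd n) (hn1 : 1 < n)
    (m g : ℤ) (hm : m * ((q : ℤ) + 1) = (q : ℤ) ^ n + 1)
    (hg : 2 * g = ((q : ℤ) - 1) * ((q : ℤ) ^ (n + 1) + (q : ℤ) ^ n - (q : ℤ) ^ 2))
    (t : ℤ) (ht : 2 * g - 1 ≤ t) :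
    (PsiSet q m t).Finite ∧ ((PsiSet q m t).ncard : ℤ) = 1 - g + t :=
  card_PsiSet_general q n hn1 m g hm hg t ht
end

section
/- If r = (r_0,…,r_{q−1}) has all coordinates nonnegative, s = (s_1,…,s_{q²−1}) has all coordinates nonnegative, and t ≥ 2g − 1, then #Ω_{r,s,t} = #Ω_{0,s,t} + |r|, where 0 denotes the zero vector in ℤ^q and |r| = Σ_{μ=0}^{q−1} r_μ. -/
/-- The lattice point set `Ω_{r,s,t}` associated with the GGS curve:
triples `(i, j, k)` with `i + r 0 ≥ 0`, `0 ≤ i + m(q+1) j_μ + r_μ < m(q+1)` for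
`μ = 1, …, q-1`, `0 ≤ i + m k_ν + s_ν < m` for `ν = 1, …, q²-1`, and
`q³ i + m(q+1)|j| + m q |k| ≤ t`. -/
def OmegaSet (q : ℕ) (hq : 0 < q) (m : ℤ) (r : Fin q → ℤ) (s : Fin (q ^ 2 - 1) → ℤ)
    (t : ℤ) : Set (ℤ × (Fin (q - 1) → ℤ) × (Fin (q ^ 2 - 1) → ℤ)) :=
  {p | 0 ≤ p.1 + r ⟨0, hq⟩ ∧
    (∀ μ : Fin (q - 1),
      0 ≤ p.1 + m * ((q : ℤ) + 1) * p.2.1 μ + r ⟨μ.val + 1, by have := μ.isLt; omega⟩ ∧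
      p.1 + m * ((q : ℤ) + 1) * p.2.1 μ + r ⟨μ.val + 1, by have := μ.isLt; omega⟩
        < m * ((q : ℤ) + 1)) ∧
    (∀ ν : Fin (q ^ 2 - 1), 0 ≤ p.1 + m * p.2.2 ν + s ν ∧ p.1 + m * p.2.2 ν + s ν < m) ∧
    (q : ℤ) ^ 3 * p.1 + m * ((q : ℤ) + 1) * (∑ μ, p.2.1 μ)
      + m * (q : ℤ) * (∑ ν, p.2.2 ν) ≤ t}

/-! For fixed `i` the constraints on `j` and `k` have exactly one solution,
`j_μ = -⌊(i + r_μ)/(m(q+1))⌋` and `k_ν = -⌊(i + s_ν)/m⌋`, so `#Ω_{r,s,t}` counts the integers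
`i ≥ -r_0` whose weight `w_r(i) = q³i + m(q+1)|j| + mq|k|` is at most `t`. Writing `D = m(q+1)`,
the weight satisfies `w_r(i + D) = w_r(i) + D`, and for `r, s ≥ 0` also
`w_r(i) ≤ i + (q-1)(D-1) + q(q²-1)(m-1) = i + 2g` (the equality is where `D = q^n + 1` enters).
Hence every `i ∈ [-r_0, 0)` is counted, and sorting `i ≥ 0` by its residue `c` modulo `D` gives
`#Ω_{r,s,t} = r_0 + ∑_c (⌊(t - w_r(c))/D⌋ + 1)`. For `0 ≤ c < D` one has
`w_r(c) = w_0(c) - D ∑_{μ ≥ 1} ⌊(c + r_μ)/D⌋`, and Hermite's identity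
`∑_{c=0}^{D-1} ⌊(c + a)/D⌋ = a` turns the difference of the two counts into `∑_{μ ≥ 1} r_μ`. -/

namespace Int

theorem eq_neg_ediv_iff {d x j : ℤ} (hd : 0 < d) :
    j = -(x / d) ↔ 0 ≤ x + d * j ∧ x + d * j < d := by
  rw [eq_comm, neg_eq_iff_eq_neg, Int.ediv_eq_iff_of_pos hd]
  constructor <;> rintro ⟨h₁, h₂⟩ <;> constructor <;> linarith

theorem sum_Ico_add_ediv {D : ℤ} (hD : 0 < D) (a : ℤ) :
    ∑ c ∈ Finset.Ico 0 D, (c + a) / D = a := by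
  lift D to ℕ using hD.le
  have hD0 : (D : ℤ) ≠ 0 := by exact_mod_cast hD.ne'
  rw [Int.Ico_eq_finset_map, Finset.sum_map]
  simp only [Function.Embedding.trans_apply, Nat.castEmbedding_apply, addLeftEmbedding_apply,
    zero_add, sub_zero, Int.toNat_natCast]
  have hstep : ∀ a : ℤ, ∑ n ∈ Finset.range D, ((n : ℤ) + (a + 1)) / D
      = ∑ n ∈ Finset.range D, ((n : ℤ) + a) / D + 1 := by
    intro a
    have h := Finset.sum_range_succ' (fun n : ℕ => ((n : ℤ) + a) / D) D
    rw [Finset.sum_range_succ, show (D : ℤ) + a = a + 1 * D by ring,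
      Int.add_mul_ediv_right _ _ hD0] at h
    simp only [Nat.cast_add, Nat.cast_one, Nat.cast_zero, zero_add, add_assoc,
      add_comm (1 : ℤ) a] at h
    linarith
  induction a using Int.induction_on with
  | zero =>
    exact Finset.sum_eq_zero fun n hn =>
      Int.ediv_eq_zero_of_lt (by positivity) (by simpa using hn)
  | succ a ih => rw [hstep, ih]
  | pred a ih =>
    have h := hstep (-(a : ℤ) - 1)
    rw [sub_add_cancel] at h
    linarith

end Int

section MapAdd

variable {D : ℤ} {f : ℤ → ℤ}

theorem map_add_mul_of_map_add (hf : ∀ i, f (i + D) = f i + D) (i k : ℤ) :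
    f (i + D * k) = f i + D * k := by
  induction k using Int.induction_on with
  | zero => simp
  | succ k ih => rw [mul_add_one, ← add_assoc, hf, ih, add_assoc]
  | pred k ih =>
    have h := hf (i + D * (-(k : ℤ) - 1))
    rw [add_assoc, ← mul_add_one, sub_add_cancel, ih] at h
    linarith

theorem setOf_nonneg_le_eq_biUnion (hD : 0 < D) (hf : ∀ i, f (i + D) = f i + D) (t : ℤ) :
    {i | 0 ≤ i ∧ f i ≤ t} = ↑((Finset.Ico 0 D).biUnion fun c =>
      (Finset.Icc 0 ((t - f c) / D)).image (c + D * ·)) := by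
  ext i
  simp only [Set.mem_ofPred_eq, Finset.coe_biUnion, Finset.coe_image, Set.mem_iUnion,
    Set.mem_image, Finset.mem_coe, Finset.mem_Ico, Finset.mem_Icc, exists_prop,
    Int.le_ediv_iff_mul_le hD]
  constructor
  · rintro ⟨hi, hfi⟩
    have hdecomp := Int.emod_add_mul_ediv i D
    refine ⟨i % D, ⟨Int.emod_nonneg i hD.ne', Int.emod_lt_of_pos i hD⟩, i / D,
      ⟨Int.ediv_nonneg hi hD.le, ?_⟩, hdecomp⟩
    rw [← hdecomp, map_add_mul_of_map_add hf] at hfi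
    linarith
  · rintro ⟨c, ⟨hc, -⟩, k, ⟨hk, hkt⟩, rfl⟩
    rw [map_add_mul_of_map_add hf]
    constructor <;> nlinarith

theorem card_biUnion_image_Icc (hD : 0 < D) (t : ℤ) :
    ((Finset.Ico 0 D).biUnion fun c => (Finset.Icc 0 ((t - f c) / D)).image (c + D * ·)).card
      = ∑ c ∈ Finset.Ico 0 D, ((t - f c) / D + 1).toNat := by
  rw [Finset.card_biUnion]
  · refine Finset.sum_congr rfl fun c _ => ?_
    have hinj : Function.Injective (c + D * ·) :=
      (add_right_injective c).comp (mul_right_injective₀ hD.ne')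
    rw [Finset.card_image_of_injective _ hinj, Int.card_Icc, sub_zero]
  · intro c hc c' hc' hne
    simp only [Function.onFun, Finset.disjoint_left, Finset.mem_image]
    rintro _ ⟨k, -, rfl⟩ ⟨k', -, h⟩
    simp only [Finset.coe_Ico, Set.mem_Ico] at hc hc'
    apply hne
    have := congrArg (· % D) h
    simpa [Int.emod_eq_of_lt hc.1 hc.2, Int.emod_eq_of_lt hc'.1 hc'.2] using this.symm

theorem ncard_setOf_le_of_map_add (hD : 0 < D) (hf : ∀ i, f (i + D) = f i + D) {a t : ℤ}
    (ha : 0 ≤ a) (hneg : ∀ i < 0, f i ≤ t) :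
    ({i | 0 ≤ i + a ∧ f i ≤ t}.ncard : ℤ) = a + ∑ c ∈ Finset.Ico 0 D, ((t - f c) / D + 1) := by
  set T := (Finset.Ico 0 D).biUnion fun c => (Finset.Icc 0 ((t - f c) / D)).image (c + D * ·)
  have hT := setOf_nonneg_le_eq_biUnion hD hf t
  have hsplit : {i | 0 ≤ i + a ∧ f i ≤ t} = ↑(Finset.Ico (-a) 0 ∪ T) := by
    rw [Finset.coe_union, ← hT]
    ext i
    simp only [Set.mem_ofPred_eq, Set.mem_union, Finset.coe_Ico, Set.mem_Ico]
    constructor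
    · rintro ⟨hi, hfi⟩
      rcases lt_or_ge i 0 with h | h
      exacts [Or.inl ⟨by linarith, h⟩, Or.inr ⟨h, hfi⟩]
    · rintro (⟨hi, h⟩ | ⟨hi, hfi⟩)
      exacts [⟨by linarith, hneg i h⟩, ⟨by linarith, hfi⟩]
  have hdisj : Disjoint (Finset.Ico (-a) 0) T := by
    rw [← Finset.disjoint_coe, ← hT, Finset.coe_Ico]
    exact Set.disjoint_left.2 fun i hi hi' => hi.2.not_ge hi'.1
  have hterm : ∀ c ∈ Finset.Ico 0 D, 0 ≤ (t - f c) / D + 1 := by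
    intro c hc
    have hprev := hneg (c - D) (by linarith [(Finset.mem_Ico.1 hc).2])
    have hshift := hf (c - D)
    rw [sub_add_cancel] at hshift
    have : -1 ≤ (t - f c) / D := (Int.le_ediv_iff_mul_le hD).2 (by linarith)
    linarith
  rw [hsplit, Set.ncard_coe_finset, Finset.card_union_of_disjoint hdisj,
    card_biUnion_image_Icc hD t, Int.card_Ico]
  push_cast
  rw [Int.toNat_of_nonneg (by linarith),
    Finset.sum_congr rfl fun c hc => Int.toNat_of_nonneg (hterm c hc)]
  ring

end MapAdd

theorem Fin.sum_univ_eq_zero_add_sum_succ {M : Type*} [AddCommMonoid M] {n : ℕ} (hn : 0 < n)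
    (f : Fin n → M) : ∑ i, f i = f ⟨0, hn⟩ + ∑ i : Fin (n - 1), f ⟨i.val + 1, by omega⟩ := by
  obtain ⟨n, rfl⟩ := Nat.exists_eq_add_of_lt hn
  exact Fin.sum_univ_succ f

section Omega

variable {q : ℕ} {m : ℤ} {r : Fin q → ℤ} {s : Fin (q ^ 2 - 1) → ℤ}

variable (q m r s) in
def omegaPoint (i : ℤ) : ℤ × (Fin (q - 1) → ℤ) × (Fin (q ^ 2 - 1) → ℤ) :=
  (i, fun μ => -((i + r ⟨μ.val + 1, by omega⟩) / (m * ((q : ℤ) + 1))), fun ν => -((i + s ν) / m))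

variable (q m r s) in
/-- `q³ i + m(q+1)|j| + mq|k|` at `(i, j, k) = omegaPoint q m r s i`. -/
def omegaWeight (i : ℤ) : ℤ :=
  (q : ℤ) ^ 3 * i
    - m * ((q : ℤ) + 1) * ∑ μ : Fin (q - 1), (i + r ⟨μ.val + 1, by omega⟩) / (m * ((q : ℤ) + 1))
    - m * q * ∑ ν, (i + s ν) / m

theorem mem_OmegaSet_iff (hq : 0 < q) (hm : 0 < m) {t : ℤ}
    {p : ℤ × (Fin (q - 1) → ℤ) × (Fin (q ^ 2 - 1) → ℤ)} :
    p ∈ OmegaSet q hq m r s t ↔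
      p = omegaPoint q m r s p.1 ∧ 0 ≤ p.1 + r ⟨0, hq⟩ ∧ omegaWeight q m r s p.1 ≤ t := by
  obtain ⟨i, j, k⟩ := p
  have hD : 0 < m * ((q : ℤ) + 1) := by positivity
  have hj : (∀ μ : Fin (q - 1), 0 ≤ i + m * ((q : ℤ) + 1) * j μ + r ⟨μ.val + 1, by omega⟩ ∧
      i + m * ((q : ℤ) + 1) * j μ + r ⟨μ.val + 1, by omega⟩ < m * ((q : ℤ) + 1)) ↔
      j = fun μ => -((i + r ⟨μ.val + 1, by omega⟩) / (m * ((q : ℤ) + 1))) := by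
    simp only [funext_iff, add_right_comm i, Int.eq_neg_ediv_iff hD]
  have hk : (∀ ν, 0 ≤ i + m * k ν + s ν ∧ i + m * k ν + s ν < m) ↔
      k = fun ν => -((i + s ν) / m) := by
    simp only [funext_iff, add_right_comm i, Int.eq_neg_ediv_iff hm]
  simp only [OmegaSet, Set.mem_ofPred_eq, hj, hk, omegaPoint, Prod.mk.injEq, true_and]
  constructor
  · rintro ⟨h0, rfl, rfl, hw⟩
    refine ⟨⟨rfl, rfl⟩, h0, ?_⟩
    simpa [omegaWeight, Finset.sum_neg_distrib, sub_eq_add_neg] using hw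
  · rintro ⟨⟨rfl, rfl⟩, h0, hw⟩
    refine ⟨h0, rfl, rfl, ?_⟩
    simpa [omegaWeight, Finset.sum_neg_distrib, sub_eq_add_neg] using hw

theorem ncard_OmegaSet (hq : 0 < q) (hm : 0 < m) (t : ℤ) :
    (OmegaSet q hq m r s t).ncard
      = {i | 0 ≤ i + r ⟨0, hq⟩ ∧ omegaWeight q m r s i ≤ t}.ncard := by
  have hinj : Function.Injective (omegaPoint q m r s) := fun i i' h => congrArg Prod.fst h
  rw [← Set.ncard_image_of_injective _ hinj]
  congr 1
  ext p
  rw [mem_OmegaSet_iff hq hm]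
  constructor
  · rintro ⟨hp, h⟩
    exact ⟨p.1, h, hp.symm⟩
  · rintro ⟨i, h, rfl⟩
    exact ⟨rfl, h⟩

theorem natCast_sq_sub_one (hq : 0 < q) : ((q ^ 2 - 1 : ℕ) : ℤ) = (q : ℤ) ^ 2 - 1 := by
  rw [Nat.cast_sub (Nat.one_le_pow _ _ hq)]
  push_cast
  ring

theorem omegaWeight_add (hq : 0 < q) (hm : m ≠ 0) (i : ℤ) :
    omegaWeight q m r s (i + m * (q + 1)) = omegaWeight q m r s i + m * (q + 1) := by
  have hD : m * ((q : ℤ) + 1) ≠ 0 := mul_ne_zero hm (by positivity)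
  have hμ : ∀ x, (i + m * (q + 1) + x) / (m * (q + 1)) = (i + x) / (m * (q + 1)) + 1 :=
    fun x => by rw [add_right_comm, ← Int.add_mul_ediv_right _ _ hD, one_mul]
  have hν : ∀ x, (i + m * (q + 1) + x) / m = (i + x) / m + (q + 1) :=
    fun x => by rw [add_right_comm, mul_comm, Int.add_mul_ediv_right _ _ hm]
  simp only [omegaWeight, hμ, hν, Finset.sum_add_distrib, Finset.sum_const, Finset.card_univ,
    Fintype.card_fin, nsmul_eq_mul, Nat.cast_pred hq, natCast_sq_sub_one hq]
  ring

theorem omegaWeight_le (hq : 0 < q) (hm : 0 < m) (hr : ∀ μ, 0 ≤ r μ) (hs : ∀ ν, 0 ≤ s ν)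
    (i : ℤ) :
    omegaWeight q m r s i ≤
      i + (q - 1) * (m * (q + 1) - 1) + q * ((q : ℤ) ^ 2 - 1) * (m - 1) := by
  have hD : 0 < m * ((q : ℤ) + 1) := by positivity
  have hμ : ∑ μ : Fin (q - 1), (i - (m * (q + 1) - 1))
      ≤ m * (q + 1) * ∑ μ : Fin (q - 1), (i + r ⟨μ.val + 1, by omega⟩) / (m * (q + 1)) := by
    rw [Finset.mul_sum]
    exact Finset.sum_le_sum fun μ _ => by
      linarith [Int.lt_mul_ediv_self_add (x := i + r ⟨μ.val + 1, by omega⟩) hD,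
        hr ⟨μ.val + 1, by omega⟩]
  have hν : ∑ ν : Fin (q ^ 2 - 1), (i - (m - 1)) ≤ m * ∑ ν, (i + s ν) / m := by
    rw [Finset.mul_sum]
    exact Finset.sum_le_sum fun ν _ => by
      linarith [Int.lt_mul_ediv_self_add (x := i + s ν) hm, hs ν]
  simp only [Finset.sum_const, Finset.card_univ, Fintype.card_fin, nsmul_eq_mul, Nat.cast_pred hq,
    natCast_sq_sub_one hq] at hμ hν
  have hqν := mul_le_mul_of_nonneg_left hν (Nat.cast_nonneg q)
  unfold omegaWeight
  linarith

theorem omegaWeight_eq_sub {c : ℤ} (hc : 0 ≤ c) (hcD : c < m * (q + 1)) :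
    omegaWeight q m r s c = omegaWeight q m (fun _ => 0) s c
      - m * (q + 1) * ∑ μ : Fin (q - 1), (c + r ⟨μ.val + 1, by omega⟩) / (m * (q + 1)) := by
  simp only [omegaWeight, add_zero, Int.ediv_eq_zero_of_lt hc hcD, Finset.sum_const_zero]
  ring

theorem sum_ediv_omegaWeight (hq : 0 < q) (hm : 0 < m) (t : ℤ) :
    ∑ c ∈ Finset.Ico 0 (m * (q + 1)), ((t - omegaWeight q m r s c) / (m * (q + 1)) + 1)
      = ∑ c ∈ Finset.Ico 0 (m * (q + 1)),
          ((t - omegaWeight q m (fun _ => 0) s c) / (m * (q + 1)) + 1)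
        + ∑ μ : Fin (q - 1), r ⟨μ.val + 1, by omega⟩ := by
  have hD : 0 < m * ((q : ℤ) + 1) := by positivity
  calc _ = ∑ c ∈ Finset.Ico 0 (m * (q + 1)),
          (((t - omegaWeight q m (fun _ => 0) s c) / (m * (q + 1)) + 1)
            + ∑ μ : Fin (q - 1), (c + r ⟨μ.val + 1, by omega⟩) / (m * (q + 1))) := by
        refine Finset.sum_congr rfl fun c hc => ?_
        obtain ⟨hc0, hcD⟩ := Finset.mem_Ico.1 hc
        rw [omegaWeight_eq_sub hc0 hcD, sub_sub_eq_add_sub, add_sub_right_comm, mul_comm,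
          Int.add_mul_ediv_right _ _ hD.ne']
        ring
    _ = _ := by
        rw [Finset.sum_add_distrib, Finset.sum_comm]
        simp only [Int.sum_Ico_add_ediv hD]

end Omega

theorem card_OmegaSet_r_zero_general (q n : ℕ) (hq : IsPrimePow q)
    (m : ℤ) (hm : m * ((q : ℤ) + 1) = (q : ℤ) ^ n + 1) (g : ℤ)
    (hg : 2 * g = ((q : ℤ) - 1) * ((q : ℤ) ^ (n + 1) + (q : ℤ) ^ n - (q : ℤ) ^ 2))
    (r : Fin q → ℤ) (s : Fin (q ^ 2 - 1) → ℤ) (t : ℤ)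
    (hr : ∀ μ, 0 ≤ r μ) (hs : ∀ ν, 0 ≤ s ν) (ht : 2 * g - 1 ≤ t) :
    ((OmegaSet q hq.pos m r s t).ncard : ℤ)
      = ((OmegaSet q hq.pos m (fun _ => 0) s t).ncard : ℤ) + (∑ μ, r μ) := by
  have hD : 0 < m * ((q : ℤ) + 1) := by rw [hm]; positivity
  have hm0 : 0 < m := pos_of_mul_pos_left hD (by positivity)
  have h2g : (q - 1) * (m * (q + 1) - 1) + q * ((q : ℤ) ^ 2 - 1) * (m - 1) = 2 * g := by
    linear_combination ((q : ℤ) ^ 2 - 1) * hm - hg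
  have hneg : ∀ r' : Fin q → ℤ, (∀ μ, 0 ≤ r' μ) → ∀ i < 0, omegaWeight q m r' s i ≤ t :=
    fun r' hr' i hi => by linarith [omegaWeight_le hq.pos hm0 hr' hs i]
  rw [ncard_OmegaSet hq.pos hm0, ncard_OmegaSet hq.pos hm0,
    ncard_setOf_le_of_map_add hD (omegaWeight_add hq.pos hm0.ne') (hr _) (hneg r hr),
    ncard_setOf_le_of_map_add hD (omegaWeight_add hq.pos hm0.ne') le_rfl
      (hneg _ fun _ => le_rfl),
    sum_ediv_omegaWeight hq.pos hm0, Fin.sum_univ_eq_zero_add_sum_succ hq.pos]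
  ring

/-- If all coordinates of `r` and `s` are nonnegative and `t ≥ 2g - 1`, then
`#Ω_{r,s,t} = #Ω_{0,s,t} + |r|`. -/
theorem card_OmegaSet_r_zero (q n : ℕ) (hq : IsPrimePow q) (hn : Odd n) (hn1 : 1 < n)
    (m : ℤ) (hm : m * ((q : ℤ) + 1) = (q : ℤ) ^ n + 1) (g : ℤ)
    (hg : 2 * g = ((q : ℤ) - 1) * ((q : ℤ) ^ (n + 1) + (q : ℤ) ^ n - (q : ℤ) ^ 2))
    (r : Fin q → ℤ) (s : Fin (q ^ 2 - 1) → ℤ) (t : ℤ)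
    (hr : ∀ μ, 0 ≤ r μ) (hs : ∀ ν, 0 ≤ s ν) (ht : 2 * g - 1 ≤ t) :
    ((OmegaSet q hq.pos m r s t).ncard : ℤ)
      = ((OmegaSet q hq.pos m (fun _ => 0) s t).ncard : ℤ) + (∑ μ, r μ) :=
  card_OmegaSet_r_zero_general q n hq m hm g hg r s t hr hs ht
end

section
/- For any (r_0,r_1,…,r_{q−1}) ∈ ℤ^q and t ∈ ℤ, one has #Ω_{(r_0,r_1,…,r_{q−1}),t} = #Ω_{(r_0,r_1,…,r_{q−1}),t−1} + 1 if and only if Σ_{μ=1}^{q−1} ⌈(q^{n−3}t − r_μ)/(m(q+1))⌉ + q(q−1)·⌈q^{n−3}t/m⌉ ≤ t + (r_0 − q^{n−3}t)/(m(q+1)), equivalently m(q+1)·Σ_{μ=1}^{q−1} ⌈(q^{n−3}t − r_μ)/(m(q+1))⌉ + mq(q²−1)·⌈q^{n−3}t/m⌉ ≤ r_0 + (q^n + 1 − q^{n−3})·t. -/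
theorem Int.ceil_intCast_div_intCast_of_pos (a : ℤ) {b : ℤ} (hb : 0 < b) :
    ⌈(a : ℚ) / (b : ℚ)⌉ = -((-a) / b) := by
  lift b to ℕ using hb.le
  exact_mod_cast Rat.ceil_intCast_div_natCast a b

theorem Int.eq_neg_ediv_iff_s9 {a d j : ℤ} (hd : 0 < d) :
    j = -(a / d) ↔ 0 ≤ a + d * j ∧ a + d * j < d := by
  rw [eq_neg_iff_add_eq_zero, add_comm, ← eq_neg_iff_add_eq_zero, Int.ediv_eq_iff_of_pos hd]
  constructor <;> rintro ⟨h₁, h₂⟩ <;> constructor <;> linarith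

theorem Set.ncard_setOf_le_eq_ncard_setOf_le_sub_one_add_one_iff {α : Type*} {p : α → Prop}
    {f : α → ℤ} {t : ℤ} {x₀ : α} (hfin : {x | p x ∧ f x ≤ t}.Finite)
    (hx₀ : ∀ x, f x = t ↔ x = x₀) :
    {x | p x ∧ f x ≤ t}.ncard = {x | p x ∧ f x ≤ t - 1}.ncard + 1 ↔ p x₀ := by
  have hsucc : ∀ x, f x ≤ t ↔ f x = t ∨ f x ≤ t - 1 := fun x ↦ by omega
  by_cases h : p x₀
  · have hins : {x | p x ∧ f x ≤ t} = insert x₀ {x | p x ∧ f x ≤ t - 1} := by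
      ext x
      simp only [Set.mem_insert_iff, Set.mem_ofPred, hsucc, hx₀]
      constructor
      · rintro ⟨hp, rfl | hf⟩
        exacts [.inl rfl, .inr ⟨hp, hf⟩]
      · rintro (rfl | ⟨hp, hf⟩)
        exacts [⟨h, .inl rfl⟩, ⟨hp, .inr hf⟩]
    have hnot : x₀ ∉ {x | p x ∧ f x ≤ t - 1} := by
      simp [(hx₀ x₀).2 rfl]
    have hfin' : {x | p x ∧ f x ≤ t - 1}.Finite :=
      hfin.subset fun x hx ↦ ⟨hx.1, hx.2.trans (by omega)⟩
    rw [hins, Set.ncard_insert_of_notMem hnot hfin']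
    simpa using h
  · have heq : {x | p x ∧ f x ≤ t} = {x | p x ∧ f x ≤ t - 1} := by
      ext x
      simp only [Set.mem_ofPred, hsucc, hx₀]
      constructor
      · rintro ⟨hp, rfl | hf⟩
        exacts [absurd hp h, ⟨hp, hf⟩]
      · exact fun ⟨hp, hf⟩ ↦ ⟨hp, .inr hf⟩
    simp [heq, h]

namespace OmegaSet

abbrev Point (q : ℕ) : Type := ℤ × (Fin (q - 1) → ℤ) × (Fin (q ^ 2 - 1) → ℤ)

variable (q : ℕ) (m : ℤ) (r' : Fin (q - 1) → ℤ)

def weight (p : Point q) : ℤ :=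
  (q : ℤ) ^ 3 * p.1 + m * ((q : ℤ) + 1) * (∑ μ, p.2.1 μ) + m * (q : ℤ) * (∑ ν, p.2.2 ν)

def latticePoint (i : ℤ) : Point q :=
  (i, fun μ ↦ -((i + r' μ) / (m * ((q : ℤ) + 1))), fun _ ↦ -(i / m))

variable {q m}

theorem weight_latticePoint (hq : 1 ≤ q) (i : ℤ) :
    weight q m (latticePoint q m r' i) =
      (q : ℤ) ^ 3 * i + m * ((q : ℤ) + 1) * (∑ μ, -((i + r' μ) / (m * ((q : ℤ) + 1))))
        + m * (q : ℤ) * ((q : ℤ) ^ 2 - 1) * (-(i / m)) := by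
  have hcard : ((q ^ 2 - 1 : ℕ) : ℤ) = (q : ℤ) ^ 2 - 1 := by
    rw [Nat.cast_sub (Nat.one_le_pow _ _ hq)]
    push_cast
    ring
  simp only [weight, latticePoint, Finset.sum_const, Finset.card_univ, Fintype.card_fin,
    nsmul_eq_mul, hcard]
  ring

theorem weight_latticePoint_add_mul (hq : 1 ≤ q) (hm : m ≠ 0) (i l : ℤ) :
    weight q m (latticePoint q m r' (i + m * ((q : ℤ) + 1) * l)) =
      weight q m (latticePoint q m r' i) + m * ((q : ℤ) + 1) * l := by
  have hM : m * ((q : ℤ) + 1) ≠ 0 := mul_ne_zero hm (by positivity)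
  have hj : ∀ μ, (i + m * ((q : ℤ) + 1) * l + r' μ) / (m * ((q : ℤ) + 1))
      = (i + r' μ) / (m * ((q : ℤ) + 1)) + l := fun μ ↦ by
    rw [add_right_comm, Int.add_mul_ediv_left _ _ hM]
  have hk : (i + m * ((q : ℤ) + 1) * l) / m = i / m + ((q : ℤ) + 1) * l := by
    rw [mul_assoc, Int.add_mul_ediv_left _ _ hm]
  simp only [weight_latticePoint r' hq, hj, hk, neg_add, Finset.sum_add_distrib,
    Finset.sum_const, Finset.card_univ, Fintype.card_fin, nsmul_eq_mul, Nat.cast_sub hq,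
    Nat.cast_one]
  ring

theorem dvd_weight_latticePoint_sub (hq : 1 ≤ q) (i : ℤ) :
    m * ((q : ℤ) + 1) ∣ weight q m (latticePoint q m r' i) - (q : ℤ) ^ 3 * i :=
  ⟨(∑ μ, -((i + r' μ) / (m * ((q : ℤ) + 1)))) + (q : ℤ) * ((q : ℤ) - 1) * (-(i / m)), by
    rw [weight_latticePoint r' hq]; ring⟩

theorem sub_sum_le_weight_latticePoint (hq : 1 ≤ q) (hm : 0 < m) (i : ℤ) :
    i - ∑ μ, r' μ ≤ weight q m (latticePoint q m r' i) := by
  have hM : 0 < m * ((q : ℤ) + 1) := by positivity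
  have hj : -((q : ℤ) - 1) * i - ∑ μ, r' μ
      ≤ m * ((q : ℤ) + 1) * ∑ μ, -((i + r' μ) / (m * ((q : ℤ) + 1))) := by
    calc -((q : ℤ) - 1) * i - ∑ μ, r' μ = ∑ μ, -(i + r' μ) := by
          simp only [neg_add, Finset.sum_add_distrib, Finset.sum_neg_distrib, Finset.sum_const,
            Finset.card_univ, Fintype.card_fin, nsmul_eq_mul, Nat.cast_sub hq, Nat.cast_one]
          ring
      _ ≤ ∑ μ, m * ((q : ℤ) + 1) * -((i + r' μ) / (m * ((q : ℤ) + 1))) :=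
          Finset.sum_le_sum fun μ _ ↦ by
            linarith [Int.ediv_mul_le (i + r' μ) hM.ne']
      _ = _ := (Finset.mul_sum ..).symm
  have hk : -i ≤ m * -(i / m) := by linarith [Int.ediv_mul_le i hm.ne']
  have hq' : (0 : ℤ) ≤ (q : ℤ) * ((q : ℤ) ^ 2 - 1) := by
    have : (1 : ℤ) ≤ q := by exact_mod_cast hq
    nlinarith
  rw [weight_latticePoint r' hq]
  nlinarith [mul_le_mul_of_nonneg_left hk hq']

theorem weight_latticePoint_injective (hq : 1 ≤ q) (hm : m ≠ 0) {u : ℤ}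
    (hu : m * ((q : ℤ) + 1) ∣ u * (q : ℤ) ^ 3 + 1) :
    Function.Injective fun i ↦ weight q m (latticePoint q m r' i) := by
  intro i i' (hii' : weight q m (latticePoint q m r' i) = weight q m (latticePoint q m r' i'))
  have hcube : m * ((q : ℤ) + 1) ∣ (q : ℤ) ^ 3 * (i' - i) := by
    have := (dvd_weight_latticePoint_sub (m := m) r' hq i).sub
      (dvd_weight_latticePoint_sub r' hq i')
    rwa [hii', sub_sub_sub_cancel_left, ← mul_sub] at this
  obtain ⟨d, hd⟩ : m * ((q : ℤ) + 1) ∣ i' - i := by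
    have := (hu.mul_right (i' - i)).sub ((hcube.mul_left u))
    rwa [show (u * (q : ℤ) ^ 3 + 1) * (i' - i) - u * ((q : ℤ) ^ 3 * (i' - i)) = i' - i by ring]
      at this
  have hshift := weight_latticePoint_add_mul r' hq hm i d
  rw [← hd, add_sub_cancel, ← hii', left_eq_add] at hshift
  exact (sub_eq_zero.1 hshift).symm

/-- `W(-u t) ≡ -u q³ t ≡ t (mod m(q+1))`, and a shift by a multiple of `m(q+1)` corrects it. -/
theorem weight_latticePoint_solution (hq : 1 ≤ q) (hm : m ≠ 0) {u : ℤ}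
    (hu : m * ((q : ℤ) + 1) ∣ u * (q : ℤ) ^ 3 + 1) (t : ℤ) :
    weight q m (latticePoint q m r' (-u * t + (t - weight q m (latticePoint q m r' (-u * t)))))
      = t := by
  obtain ⟨l, hl⟩ : m * ((q : ℤ) + 1) ∣ t - weight q m (latticePoint q m r' (-u * t)) := by
    have := (hu.mul_right t).sub (dvd_weight_latticePoint_sub (m := m) r' hq (-u * t))
    rwa [show (u * (q : ℤ) ^ 3 + 1) * t - (weight q m (latticePoint q m r' (-u * t))
        - (q : ℤ) ^ 3 * (-u * t)) = t - weight q m (latticePoint q m r' (-u * t)) by ring] at this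
  rw [hl, weight_latticePoint_add_mul r' hq hm, ← hl, add_sub_cancel]

theorem weight_latticePoint_neg (hq : 1 ≤ q) (hm : 0 < m) (x : ℤ) :
    weight q m (latticePoint q m r' (-x)) =
      -(q : ℤ) ^ 3 * x
        + m * ((q : ℤ) + 1) * ∑ μ, ⌈((x - r' μ : ℤ) : ℚ) / ((m * ((q : ℤ) + 1) : ℤ) : ℚ)⌉
        + m * (q : ℤ) * ((q : ℤ) ^ 2 - 1) * ⌈(x : ℚ) / (m : ℚ)⌉ := by
  have hM : 0 < m * ((q : ℤ) + 1) := by positivity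
  simp only [weight_latticePoint r' hq, Int.ceil_intCast_div_intCast_of_pos _ hM,
    Int.ceil_intCast_div_intCast_of_pos _ hm, neg_sub', sub_neg_eq_add]
  ring

theorem eq_image_latticePoint (hq : 0 < q) (hm : 0 < m) (r : Fin q → ℤ) (t : ℤ) :
    OmegaSet q hq m r (fun _ ↦ 0) t =
      latticePoint q m (fun μ ↦ r ⟨μ.val + 1, by have := μ.isLt; omega⟩) ''
        {i | -r ⟨0, hq⟩ ≤ i ∧
          weight q m (latticePoint q m (fun μ ↦ r ⟨μ.val + 1, by have := μ.isLt; omega⟩) i)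
            ≤ t} := by
  have hM : 0 < m * ((q : ℤ) + 1) := by positivity
  ext ⟨i, j, k⟩
  have hpoint : (i, j, k) = latticePoint q m (fun μ ↦ r ⟨μ.val + 1, by have := μ.isLt; omega⟩) i
      ↔ (∀ μ : Fin (q - 1),
          0 ≤ i + m * ((q : ℤ) + 1) * j μ + r ⟨μ.val + 1, by have := μ.isLt; omega⟩ ∧
          i + m * ((q : ℤ) + 1) * j μ + r ⟨μ.val + 1, by have := μ.isLt; omega⟩
            < m * ((q : ℤ) + 1)) ∧
        ∀ ν : Fin (q ^ 2 - 1), 0 ≤ i + m * k ν + 0 ∧ i + m * k ν + 0 < m := by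
    simp only [latticePoint, Prod.mk.injEq, true_and, funext_iff, Int.eq_neg_ediv_iff_s9 hM,
      Int.eq_neg_ediv_iff_s9 hm, add_zero, add_right_comm i]
  constructor
  · rintro ⟨h₀, hj, hk, hw⟩
    exact ⟨i, ⟨by linarith, (hpoint.2 ⟨hj, hk⟩) ▸ hw⟩, (hpoint.2 ⟨hj, hk⟩).symm⟩
  · rintro ⟨i', ⟨h₀, hw⟩, hi'⟩
    obtain rfl : i' = i := congrArg Prod.fst hi'
    obtain ⟨hj, hk⟩ := hpoint.1 hi'.symm
    exact ⟨by linarith, hj, hk, hi' ▸ hw⟩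

end OmegaSet

open OmegaSet in
/-- `#Ω_{(r₀,…,r_(q-1)),t} = #Ω_{(r₀,…,r_(q-1)),t-1} + 1` iff
`m(q+1)·Σ_μ ⌈(q^(n-3) t - r_μ)/(m(q+1))⌉ + m q (q²-1)·⌈q^(n-3) t/m⌉
  ≤ r₀ + (q^n + 1 - q^(n-3)) t`. -/
theorem card_OmegaSet_sub_one_t (q n : ℕ) (hq : IsPrimePow q) (hn : Odd n) (hn1 : 1 < n)
    (m : ℤ) (hm : m * ((q : ℤ) + 1) = (q : ℤ) ^ n + 1)
    (r : Fin q → ℤ) (t : ℤ) :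
    (OmegaSet q hq.pos m r (fun _ => 0) t).ncard
        = (OmegaSet q hq.pos m r (fun _ => 0) (t - 1)).ncard + 1 ↔
      m * ((q : ℤ) + 1) *
          (∑ μ : Fin (q - 1),
            ⌈(((q : ℤ) ^ (n - 3) * t - r ⟨μ.val + 1, by have := μ.isLt; omega⟩ : ℤ) : ℚ)
              / ((m * ((q : ℤ) + 1) : ℤ) : ℚ)⌉)
        + m * (q : ℤ) * ((q : ℤ) ^ 2 - 1) * ⌈(((q : ℤ) ^ (n - 3) * t : ℤ) : ℚ) / ((m : ℤ) : ℚ)⌉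
        ≤ r ⟨0, hq.pos⟩ + ((q : ℤ) ^ n + 1 - (q : ℤ) ^ (n - 3)) * t := by
  have hq1 : 1 ≤ q := hq.pos
  have hpow : (q : ℤ) ^ (n - 3) * (q : ℤ) ^ 3 = (q : ℤ) ^ n := by
    obtain ⟨k, rfl⟩ := hn
    rw [← pow_add]
    congr 1
    omega
  have hm0 : 0 < m := by
    have : 0 < m * ((q : ℤ) + 1) := by rw [hm]; positivity
    exact pos_of_mul_pos_left this (by positivity)
  have hu : m * ((q : ℤ) + 1) ∣ (q : ℤ) ^ (n - 3) * (q : ℤ) ^ 3 + 1 := by rw [hpow, hm]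
  set r' : Fin (q - 1) → ℤ := fun μ ↦ r ⟨μ.val + 1, by have := μ.isLt; omega⟩
  have hfin : {i | -r ⟨0, hq.pos⟩ ≤ i ∧ weight q m (latticePoint q m r' i) ≤ t}.Finite :=
    (Set.finite_Icc (-r ⟨0, hq.pos⟩) (t + ∑ μ, r' μ)).subset fun i ⟨h₀, hw⟩ ↦
      ⟨h₀, by linarith [sub_sum_le_weight_latticePoint r' hq1 hm0 i]⟩
  have hinj := weight_latticePoint_injective r' hq1 hm0.ne' hu
  rw [eq_image_latticePoint hq.pos hm0, eq_image_latticePoint hq.pos hm0,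
    Set.ncard_image_of_injective _ (fun _ _ h ↦ congrArg Prod.fst h),
    Set.ncard_image_of_injective _ (fun _ _ h ↦ congrArg Prod.fst h),
    Set.ncard_setOf_le_eq_ncard_setOf_le_sub_one_add_one_iff hfin
      (fun i ↦ hinj.eq_iff' (weight_latticePoint_solution r' hq1 hm0.ne' hu t)),
    neg_mul, weight_latticePoint_neg r' hq1 hm0]
  dsimp only [r']
  rw [← hpow]
  constructor <;> intro h <;> linarith
end
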